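/- Pruning conserves conflict-free behaviors: for any set of lifelines L', if i ↝_{L'} i', t ∈ ρ(i), and t contains no action on any lifeline of L', then t ∈ ρ(i'). -/

import Mathlib

/-- Conflict predicate: trace `t` contains an action occurring on lifeline `l`. -/
def conflict {A L : Type} (theta : A → L) : List A → L → Prop
  | [], _ => False
  | a :: t, l => theta a = l ∨ conflict theta t l

/-- Conditional conflict predicate: trace `t` contains an action on lifeline `l` with `l ∉ r`. -/
def condConflict {A L : Type} (theta : A → L) (r : Set L) : List A → L → Prop
  | [], _ => False
  | a :: t, l => (theta a = l ∧ l ∉ r) ∨ condConflict theta r t l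

/-- Conditional sequencing: `CondSeq theta r t1 t2 t` means `t ∈ t1 ⫽_r t2`. -/
inductive CondSeq {A L : Type} (theta : A → L) (r : Set L) :
    List A → List A → List A → Prop
  | nil_left (t2 : List A) : CondSeq theta r [] t2 t2
  | nil_right (t1 : List A) : CondSeq theta r t1 [] t1
  | left {a1 a2 : A} {t1 t2 t : List A} :
      CondSeq theta r t1 (a2 :: t2) t →
      CondSeq theta r (a1 :: t1) (a2 :: t2) (a1 :: t)
  | right {a1 a2 : A} {t1 t2 t : List A} :
      CondSeq theta r (a1 :: t1) t2 t →
      ¬ condConflict theta r (a1 :: t1) (theta a2) →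
      CondSeq theta r (a1 :: t1) (a2 :: t2) (a2 :: t)

/-- Interaction terms. -/
inductive Interaction (A L : Type) where
  | empty : Interaction A L
  | act : A → Interaction A L
  | alt : Interaction A L → Interaction A L → Interaction A L
  | strict : Interaction A L → Interaction A L → Interaction A L
  | coreg : Set L → Interaction A L → Interaction A L → Interaction A L
  | loopS : Interaction A L → Interaction A L
  | loopC : Set L → Interaction A L → Interaction A L

/-- Concatenation (strict sequencing) of sets of traces. -/
def concatSet {A : Type} (S1 S2 : Set (List A)) : Set (List A) :=
  {t | ∃ u ∈ S1, ∃ v ∈ S2, t = u ++ v}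

/-- Conditional sequencing of sets of traces. -/
def condSeqSet {A L : Type} (theta : A → L) (r : Set L) (S1 S2 : Set (List A)) :
    Set (List A) :=
  {t | ∃ u ∈ S1, ∃ v ∈ S2, CondSeq theta r u v t}

/-- `j`-th power of a trace set under a binary scheduling operator. -/
def powOp {A : Type} (op : Set (List A) → Set (List A) → Set (List A))
    (S : Set (List A)) : ℕ → Set (List A)
  | 0 => {([] : List A)}
  | n + 1 => op S (powOp op S n)

/-- Kleene closure of a trace set under a binary scheduling operator. -/
def kleene {A : Type} (op : Set (List A) → Set (List A) → Set (List A))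
    (S : Set (List A)) : Set (List A) :=
  ⋃ n : ℕ, powOp op S n

/-- Denotational semantics of interactions (sets of global traces). -/
def rho {A L : Type} (theta : A → L) : Interaction A L → Set (List A)
  | .empty => {([] : List A)}
  | .act a => {[a]}
  | .alt i1 i2 => rho theta i1 ∪ rho theta i2
  | .strict i1 i2 => concatSet (rho theta i1) (rho theta i2)
  | .coreg r i1 i2 => condSeqSet theta r (rho theta i1) (rho theta i2)
  | .loopS i1 => kleene concatSet (rho theta i1)
  | .loopC r i1 => kleene (condSeqSet theta r) (rho theta i1)

/-- `CannotPrune theta L' i` : all behaviors of `i` involve an action on a lifeline of `L'`. -/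
inductive CannotPrune {A L : Type} (theta : A → L) (L' : Set L) : Interaction A L → Prop
  | act {a : A} : theta a ∈ L' → CannotPrune theta L' (.act a)
  | alt {i1 i2 : Interaction A L} :
      CannotPrune theta L' i1 → CannotPrune theta L' i2 → CannotPrune theta L' (.alt i1 i2)
  | strict_left {i1 i2 : Interaction A L} :
      CannotPrune theta L' i1 → CannotPrune theta L' (.strict i1 i2)
  | strict_right {i1 i2 : Interaction A L} :
      CannotPrune theta L' i2 → CannotPrune theta L' (.strict i1 i2)
  | coreg_left {r : Set L} {i1 i2 : Interaction A L} :
      CannotPrune theta L' i1 → CannotPrune theta L' (.coreg r i1 i2)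
  | coreg_right {r : Set L} {i1 i2 : Interaction A L} :
      CannotPrune theta L' i2 → CannotPrune theta L' (.coreg r i1 i2)

/-- Pruning relation: `Prunes theta L' i i'` means `i ↝_{L'} i'`. -/
inductive Prunes {A L : Type} (theta : A → L) (L' : Set L) :
    Interaction A L → Interaction A L → Prop
  | empty : Prunes theta L' .empty .empty
  | act {a : A} : theta a ∉ L' → Prunes theta L' (.act a) (.act a)
  | alt_both {i1 i2 i1' i2' : Interaction A L} :
      Prunes theta L' i1 i1' → Prunes theta L' i2 i2' →
      Prunes theta L' (.alt i1 i2) (.alt i1' i2')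
  | alt_left {i1 i2 i1' : Interaction A L} :
      Prunes theta L' i1 i1' → CannotPrune theta L' i2 →
      Prunes theta L' (.alt i1 i2) i1'
  | alt_right {i1 i2 i2' : Interaction A L} :
      Prunes theta L' i2 i2' → CannotPrune theta L' i1 →
      Prunes theta L' (.alt i1 i2) i2'
  | strict {i1 i2 i1' i2' : Interaction A L} :
      Prunes theta L' i1 i1' → Prunes theta L' i2 i2' →
      Prunes theta L' (.strict i1 i2) (.strict i1' i2')
  | coreg {r : Set L} {i1 i2 i1' i2' : Interaction A L} :
      Prunes theta L' i1 i1' → Prunes theta L' i2 i2' →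
      Prunes theta L' (.coreg r i1 i2) (.coreg r i1' i2')
  | loopS {i1 i1' : Interaction A L} :
      Prunes theta L' i1 i1' → Prunes theta L' (.loopS i1) (.loopS i1')
  | loopS_elim {i1 : Interaction A L} :
      CannotPrune theta L' i1 → Prunes theta L' (.loopS i1) .empty
  | loopC {r : Set L} {i1 i1' : Interaction A L} :
      Prunes theta L' i1 i1' → Prunes theta L' (.loopC r i1) (.loopC r i1')
  | loopC_elim {r : Set L} {i1 : Interaction A L} :
      CannotPrune theta L' i1 → Prunes theta L' (.loopC r i1) .empty

/-!
Every trace produced by concatenation or conditional sequencing is a permutation of the two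
traces it is built from, so a trace without actions on `L'` only arises from operands without
actions on `L'`. Hence, by induction on `i ↝_{L'} i'`, the conflict-free traces of every
retained subterm are kept, while a discarded subterm (one that cannot be pruned) has no
conflict-free trace at all and so cannot contribute to a conflict-free trace of `i`.
-/

variable {A L : Type} {theta : A → L} {L' : Set L}

theorem conflict_iff_exists_mem {t : List A} {l : L} :
    conflict theta t l ↔ ∃ a ∈ t, theta a = l := by
  induction t with
  | nil => simp [conflict]
  | cons a t ih => simp [conflict, ih]

theorem CondSeq.perm {r : Set L} {u v t : List A} (h : CondSeq theta r u v t) :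
    t.Perm (u ++ v) := by
  induction h with
  | nil_left => rfl
  | nil_right => simp
  | left _ ih => exact ih.cons _
  | right _ _ ih => exact (ih.cons _).trans List.perm_middle.symm

def conflictFree (theta : A → L) (L' : Set L) : Set (List A) :=
  {t | ∀ l ∈ L', ¬ conflict theta t l}

theorem mem_conflictFree_iff {t : List A} :
    t ∈ conflictFree theta L' ↔ ∀ a ∈ t, theta a ∉ L' := by
  simp only [conflictFree, Set.mem_ofPred_eq, conflict_iff_exists_mem]
  grind

theorem conflictFree_of_subset {u t : List A} (hut : u ⊆ t)
    (ht : t ∈ conflictFree theta L') : u ∈ conflictFree theta L' :=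
  mem_conflictFree_iff.2 fun a ha => mem_conflictFree_iff.1 ht a (hut ha)

theorem append_mem_conflictFree_iff {u v : List A} :
    u ++ v ∈ conflictFree theta L' ↔
      u ∈ conflictFree theta L' ∧ v ∈ conflictFree theta L' := by
  simp only [mem_conflictFree_iff, List.forall_mem_append]

/-- `concatSet` is `seqSet (fun u v t => t = u ++ v)` and `condSeqSet theta r` is
`seqSet (CondSeq theta r)`, both definitionally. -/
def seqSet (R : List A → List A → List A → Prop) (S1 S2 : Set (List A)) : Set (List A) :=
  {t | ∃ u ∈ S1, ∃ v ∈ S2, R u v t}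

section seqSet

variable {R : List A → List A → List A → Prop}
  (hR : ∀ ⦃u v t⦄, R u v t → u ++ v ⊆ t)
include hR

theorem mem_conflictFree_of_rel {u v t : List A} (huvt : R u v t)
    (ht : t ∈ conflictFree theta L') :
    u ∈ conflictFree theta L' ∧ v ∈ conflictFree theta L' :=
  append_mem_conflictFree_iff.1 (conflictFree_of_subset (hR huvt) ht)

theorem seqSet_inter_conflictFree_subset {S1 S2 T1 T2 : Set (List A)}
    (h1 : S1 ∩ conflictFree theta L' ⊆ T1) (h2 : S2 ∩ conflictFree theta L' ⊆ T2) :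
    seqSet R S1 S2 ∩ conflictFree theta L' ⊆ seqSet R T1 T2 := by
  rintro t ⟨⟨u, hu, v, hv, huvt⟩, ht⟩
  obtain ⟨hu', hv'⟩ := mem_conflictFree_of_rel hR huvt ht
  exact ⟨u, h1 ⟨hu, hu'⟩, v, h2 ⟨hv, hv'⟩, huvt⟩

theorem disjoint_seqSet_conflictFree_left {S1 : Set (List A)}
    (h1 : Disjoint S1 (conflictFree theta L')) (S2 : Set (List A)) :
    Disjoint (seqSet R S1 S2) (conflictFree theta L') := by
  refine Set.disjoint_left.2 ?_
  rintro t ⟨u, hu, v, -, huvt⟩ ht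
  exact Set.disjoint_left.1 h1 hu (mem_conflictFree_of_rel hR huvt ht).1

theorem disjoint_seqSet_conflictFree_right {S2 : Set (List A)}
    (h2 : Disjoint S2 (conflictFree theta L')) (S1 : Set (List A)) :
    Disjoint (seqSet R S1 S2) (conflictFree theta L') := by
  refine Set.disjoint_left.2 ?_
  rintro t ⟨u, -, v, hv, huvt⟩ ht
  exact Set.disjoint_left.1 h2 hv (mem_conflictFree_of_rel hR huvt ht).2

theorem kleene_seqSet_inter_conflictFree_subset {S T : Set (List A)}
    (hST : S ∩ conflictFree theta L' ⊆ T) :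
    kleene (seqSet R) S ∩ conflictFree theta L' ⊆ kleene (seqSet R) T := by
  suffices ∀ n, powOp (seqSet R) S n ∩ conflictFree theta L' ⊆ powOp (seqSet R) T n by
    rintro t ⟨⟨_, ⟨n, rfl⟩, htn⟩, ht⟩
    exact Set.mem_iUnion.2 ⟨n, this n ⟨htn, ht⟩⟩
  intro n
  induction n with
  | zero => exact Set.inter_subset_left
  | succ n ih => exact seqSet_inter_conflictFree_subset hR hST ih

theorem kleene_seqSet_inter_conflictFree_subset_nil {S : Set (List A)}
    (hS : Disjoint S (conflictFree theta L')) :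
    kleene (seqSet R) S ∩ conflictFree theta L' ⊆ {[]} := by
  rintro t ⟨⟨_, ⟨n, rfl⟩, htn⟩, ht⟩
  cases n with
  | zero => exact htn
  | succ n =>
    exact absurd ht (Set.disjoint_left.1 (disjoint_seqSet_conflictFree_left hR hS _) htn)

end seqSet

theorem append_subset_of_eq_append : ∀ ⦃u v t : List A⦄, t = u ++ v → u ++ v ⊆ t := by
  rintro u v _ rfl
  exact List.Subset.refl _

theorem CondSeq.append_subset {r : Set L} :
    ∀ ⦃u v t : List A⦄, CondSeq theta r u v t → u ++ v ⊆ t :=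
  fun _ _ _ h => h.perm.symm.subset

theorem CannotPrune.disjoint_rho_conflictFree {i : Interaction A L}
    (h : CannotPrune theta L' i) : Disjoint (rho theta i) (conflictFree theta L') := by
  induction h with
  | act ha =>
    exact Set.disjoint_singleton_left.2 fun hfree => mem_conflictFree_iff.1 hfree _ (by simp) ha
  | alt _ _ ih1 ih2 => exact Disjoint.union_left ih1 ih2
  | strict_left _ ih => exact disjoint_seqSet_conflictFree_left append_subset_of_eq_append ih _
  | strict_right _ ih => exact disjoint_seqSet_conflictFree_right append_subset_of_eq_append ih _
  | coreg_left _ ih => exact disjoint_seqSet_conflictFree_left CondSeq.append_subset ih _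
  | coreg_right _ ih => exact disjoint_seqSet_conflictFree_right CondSeq.append_subset ih _

theorem Prunes.rho_inter_conflictFree_subset {i i' : Interaction A L}
    (h : Prunes theta L' i i') : rho theta i ∩ conflictFree theta L' ⊆ rho theta i' := by
  induction h with
  | empty | act _ => exact Set.inter_subset_left
  | alt_both _ _ ih1 ih2 =>
    rw [rho, Set.union_inter_distrib_right]
    exact Set.union_subset_union ih1 ih2
  | alt_left _ hcp ih =>
    rw [rho, Set.union_inter_distrib_right, hcp.disjoint_rho_conflictFree.inter_eq,
      Set.union_empty]
    exact ih
  | alt_right _ hcp ih =>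
    rw [rho, Set.union_inter_distrib_right, hcp.disjoint_rho_conflictFree.inter_eq,
      Set.empty_union]
    exact ih
  | strict _ _ ih1 ih2 => exact seqSet_inter_conflictFree_subset append_subset_of_eq_append ih1 ih2
  | coreg _ _ ih1 ih2 => exact seqSet_inter_conflictFree_subset CondSeq.append_subset ih1 ih2
  | loopS _ ih => exact kleene_seqSet_inter_conflictFree_subset append_subset_of_eq_append ih
  | loopC _ ih => exact kleene_seqSet_inter_conflictFree_subset CondSeq.append_subset ih
  | loopS_elim hcp =>
    exact kleene_seqSet_inter_conflictFree_subset_nil append_subset_of_eq_append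
      hcp.disjoint_rho_conflictFree
  | loopC_elim hcp =>
    exact kleene_seqSet_inter_conflictFree_subset_nil CondSeq.append_subset
      hcp.disjoint_rho_conflictFree

/-- Pruning conserves conflict-free behaviors. -/
theorem prune_conserves_conflict_free {A L : Type} (theta : A → L)
    (L' : Set L) (i i' : Interaction A L) (t : List A)
    (h : Prunes theta L' i i') (ht : t ∈ rho theta i)
    (hfree : ∀ l ∈ L', ¬ conflict theta t l) :
    t ∈ rho theta i' :=
  h.rho_inter_conflictFree_subset ⟨ht, hfree⟩
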